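/- arXiv:2006.05027 — 2 statements merged into one kernel-verified Lean document; each statement's English description precedes it below -/
import Mathlib

section
/- Fix real numbers λ > 0, ℓ ≥ 0 and an angle θ ∈ (0, π), and let S_θ = {(x, y) ∈ ℝ² : y·cos θ/sin θ ≤ x ≤ ℓ + y·cos θ/sin θ}. Then λ · ∫∫_{S_θ} exp(−λ π y² / sin² θ) dx dy = ℓ · √λ · sin θ, where the double integral is the Lebesgue integral over the strip S_θ ⊆ ℝ². -/
open MeasureTheory Real

/-! The shear `(x, y) ↦ (x - y cot θ, y)` preserves Lebesgue measure (Fubini plus translation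
invariance on each horizontal line) and maps `S_θ` onto `[0, ℓ] × ℝ`. Since the integrand depends on
`y` only, the integral is `ℓ` times the Gaussian integral `∫ exp(-λπy²/sin²θ) dy = sin θ / √λ`. -/

def MeasurableEquiv.addShear {G β : Type*} [MeasurableSpace G] [MeasurableSpace β] [AddGroup G]
    [MeasurableAdd₂ G] [MeasurableNeg G] (g : β → G) (hg : Measurable g) : G × β ≃ᵐ G × β where
  toFun p := (p.1 + g p.2, p.2)
  invFun p := (p.1 - g p.2, p.2)
  left_inv p := by simp
  right_inv p := by simp
  measurable_toFun := (measurable_fst.add (hg.comp measurable_snd)).prodMk measurable_snd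
  measurable_invFun := (measurable_fst.sub (hg.comp measurable_snd)).prodMk measurable_snd

namespace MeasureTheory

variable {G β E : Type*} [MeasurableSpace G] [MeasurableSpace β] [AddGroup G]
  [MeasurableAdd₂ G] [MeasurableNeg G] [NormedAddCommGroup E] [NormedSpace ℝ E]

theorem measurePreserving_addShear (μ : Measure G) (ν : Measure β) [SFinite μ] [SFinite ν]
    [μ.IsAddRightInvariant] {g : β → G} (hg : Measurable g) :
    MeasurePreserving (MeasurableEquiv.addShear g hg) (μ.prod ν) (μ.prod ν) :=
  (Measure.measurePreserving_swap.comp <| ((MeasurePreserving.id ν).skew_product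
    (g := fun y x => x + g y) (measurable_snd.add (hg.comp measurable_fst))
    (ae_of_all _ fun y => map_add_right_eq_self μ (g y))).comp Measure.measurePreserving_swap :)

theorem setIntegral_fun_snd_of_sub_mem (μ : Measure G) (ν : Measure β) [SFinite μ] [SFinite ν]
    [μ.IsAddRightInvariant] {g : β → G} (hg : Measurable g) (s : Set G) (f : β → E) :
    ∫ p in {p : G × β | p.1 - g p.2 ∈ s}, f p.2 ∂μ.prod ν = μ.real s • ∫ y, f y ∂ν := by
  set σ := MeasurableEquiv.addShear g hg
  have hpre : {p : G × β | p.1 - g p.2 ∈ s} = σ.symm ⁻¹' (s ×ˢ Set.univ) := by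
    ext p; simp [σ, MeasurableEquiv.addShear]
  calc ∫ p in {p : G × β | p.1 - g p.2 ∈ s}, f p.2 ∂μ.prod ν
      = ∫ p in σ.symm ⁻¹' (s ×ˢ Set.univ), f (σ.symm p).2 ∂μ.prod ν := by rw [hpre]; rfl
    _ = ∫ q in s ×ˢ Set.univ, f q.2 ∂μ.prod ν :=
      (measurePreserving_addShear μ ν hg).symm.setIntegral_preimage_emb
        σ.symm.measurableEmbedding (fun q => f q.2) _
    _ = ∫ q, f q.2 ∂(μ.restrict s).prod ν := by rw [← Measure.prod_restrict, Measure.restrict_univ]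
    _ = μ.real s • ∫ y, f y ∂ν := by rw [integral_fun_snd, measureReal_restrict_apply_univ]

theorem setIntegral_strip_fun_snd {g : ℝ → ℝ} (hg : Measurable g) {ℓ : ℝ} (hℓ : 0 ≤ ℓ)
    (f : ℝ → E) :
    ∫ p in {p : ℝ × ℝ | g p.2 ≤ p.1 ∧ p.1 ≤ ℓ + g p.2}, f p.2 = ℓ • ∫ y, f y := by
  have hstrip : {p : ℝ × ℝ | g p.2 ≤ p.1 ∧ p.1 ≤ ℓ + g p.2} =
      {p : ℝ × ℝ | p.1 - g p.2 ∈ Set.Icc 0 ℓ} := by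
    ext p; simp only [Set.mem_ofPred_eq, Set.mem_Icc, sub_nonneg, sub_le_iff_le_add]
  rw [hstrip, Measure.volume_eq_prod, setIntegral_fun_snd_of_sub_mem _ _ hg,
    Real.volume_real_Icc_of_le hℓ, sub_zero]

end MeasureTheory

/-- Main integral computation for the intensity of beam reselection: for `λ > 0`,
`ℓ ≥ 0` and `θ ∈ (0, π)`, the integral over the strip
`S_θ = {(x, y) : y cos θ / sin θ ≤ x ≤ ℓ + y cos θ / sin θ}` of
`exp(-λ π y² / sin² θ)` times `λ` equals `ℓ √λ sin θ`. -/
theorem strip_integral (lam ℓ θ : ℝ) (hlam : 0 < lam) (hℓ : 0 ≤ ℓ)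
    (hθ : θ ∈ Set.Ioo 0 Real.pi) :
    lam * ∫ p in {p : ℝ × ℝ |
        p.2 * Real.cos θ / Real.sin θ ≤ p.1 ∧
        p.1 ≤ ℓ + p.2 * Real.cos θ / Real.sin θ},
        Real.exp (-(lam * Real.pi * p.2 ^ 2 / Real.sin θ ^ 2))
      = ℓ * Real.sqrt lam * Real.sin θ := by
  have hsin : 0 < sin θ := sin_pos_of_pos_of_lt_pi hθ.1 hθ.2
  have hgauss : ∫ y, exp (-(lam * π * y ^ 2 / sin θ ^ 2)) = √(π / (lam * π / sin θ ^ 2)) := by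
    rw [← integral_gaussian]; congr 1; ext y; ring_nf
  rw [setIntegral_strip_fun_snd (g := fun y => y * cos θ / sin θ) (by fun_prop) hℓ
    (fun y => exp (-(lam * π * y ^ 2 / sin θ ^ 2))), smul_eq_mul,
    hgauss, show π / (lam * π / sin θ ^ 2) = sin θ ^ 2 / lam by field_simp,
    sqrt_div (sq_nonneg _), sqrt_sq hsin.le]
  have hsqrt : √lam ^ 2 = lam := sq_sqrt hlam.le
  field_simp
  rw [hsqrt, mul_comm]
end

section
/- Fix a real number λ > 0, a real number ℓ ≥ 0, and a positive integer n. For θ ∈ (0, π) let S_θ = {(x, y) ∈ ℝ² : y·cos θ/sin θ ≤ x ≤ ℓ + y·cos θ/sin θ}. Then 2^{n−1} · (1/π) · ∫₀^π ( λ · ∫∫_{S_θ} exp(−λ π y² / sin² θ) dx dy ) dθ = (2^n √λ / π) · ℓ. -/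
open MeasureTheory Real

/-! For fixed `θ` the integrand depends on `y` only and every horizontal slice of the sheared
strip `S_θ` has length `ℓ`, so by Fubini the inner integral is `ℓ` times a Gaussian integral,
namely `ℓ sin θ / √λ`. Averaging `sin θ` over `(0, π)` gives `2 / π`. -/

section ShearedStrip

variable {E : Type*} [NormedAddCommGroup E] [NormedSpace ℝ E] [CompleteSpace E]

lemma measurableSet_shearedStrip {a : ℝ → ℝ} (ha : Measurable a) (ℓ : ℝ) :
    MeasurableSet {p : ℝ × ℝ | a p.2 ≤ p.1 ∧ p.1 ≤ ℓ + a p.2} :=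
  (measurableSet_le (ha.comp measurable_snd) measurable_fst).inter
    (measurableSet_le measurable_fst (measurable_const.add (ha.comp measurable_snd)))

lemma integral_indicator_Icc_add_const {ℓ : ℝ} (hℓ : 0 ≤ ℓ) (b : ℝ) (e : E) :
    ∫ x, (Set.Icc b (ℓ + b)).indicator (fun _ => e) x = ℓ • e := by
  rw [integral_indicator_const _ measurableSet_Icc, measureReal_def, Real.volume_Icc,
    add_sub_cancel_right, ENNReal.toReal_ofReal hℓ]

lemma integral_shearedStrip {g : ℝ → E} (hg : Integrable g) {a : ℝ → ℝ} (ha : Measurable a)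
    {ℓ : ℝ} (hℓ : 0 ≤ ℓ) :
    ∫ p in {p : ℝ × ℝ | a p.2 ≤ p.1 ∧ p.1 ≤ ℓ + a p.2}, g p.2 = ℓ • ∫ y, g y := by
  set S := {p : ℝ × ℝ | a p.2 ≤ p.1 ∧ p.1 ≤ ℓ + a p.2}
  have hS : MeasurableSet S := measurableSet_shearedStrip ha ℓ
  have slice : ∀ x y, S.indicator (fun p => g p.2) (x, y) =
      (Set.Icc (a y) (ℓ + a y)).indicator (fun _ => g y) x := fun _ _ => rfl
  have hF : Integrable (S.indicator fun p => g p.2) (volume.prod volume) := by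
    refine (integrable_prod_iff' ((hg.aestronglyMeasurable.comp_snd).indicator hS)).2
      ⟨.of_forall fun y => ?_, ?_⟩
    · simp_rw [slice]
      exact (integrableOn_const measure_Icc_lt_top.ne).integrable_indicator measurableSet_Icc
    · simp_rw [slice, norm_indicator_eq_indicator_norm, integral_indicator_Icc_add_const hℓ,
        smul_eq_mul]
      exact hg.norm.const_mul ℓ
  calc ∫ p in S, g p.2 = ∫ p, S.indicator (fun p => g p.2) p := (integral_indicator hS).symm
    _ = ∫ y, ∫ x, S.indicator (fun p => g p.2) (x, y) := by
      rw [Measure.volume_eq_prod]; exact integral_prod_symm _ hF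
    _ = ℓ • ∫ y, g y := by simp_rw [slice, integral_indicator_Icc_add_const hℓ, integral_smul]

end ShearedStrip

lemma integrable_exp_neg_mul_pi_mul_sq_div_sq {lam s : ℝ} (hlam : 0 < lam) (hs : 0 < s) :
    Integrable fun y : ℝ => exp (-(lam * π * y ^ 2 / s ^ 2)) := by
  convert integrable_exp_neg_mul_sq (b := lam * π / s ^ 2) (by positivity) using 3
  ring

lemma integral_exp_neg_mul_pi_mul_sq_div_sq {lam s : ℝ} (hlam : 0 < lam) (hs : 0 < s) :
    ∫ y, exp (-(lam * π * y ^ 2 / s ^ 2)) = s / √lam := by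
  have hexponent : ∀ y : ℝ, -(lam * π * y ^ 2 / s ^ 2) = -(lam * π / s ^ 2) * y ^ 2 := by
    intro y; ring
  have hratio : π / (lam * π / s ^ 2) = s ^ 2 / lam := by field_simp
  simp_rw [hexponent, integral_gaussian, hratio, sqrt_div (sq_nonneg s), sqrt_sq hs.le]

lemma expected_boundary_crossings_eq {lam ℓ θ : ℝ} (hlam : 0 < lam) (hℓ : 0 ≤ ℓ)
    (hθ : θ ∈ Set.Ioo 0 π) :
    lam * ∫ p in {p : ℝ × ℝ | p.2 * cos θ / sin θ ≤ p.1 ∧ p.1 ≤ ℓ + p.2 * cos θ / sin θ},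
        exp (-(lam * π * p.2 ^ 2 / sin θ ^ 2)) = √lam * ℓ * sin θ := by
  have hs : 0 < sin θ := sin_pos_of_pos_of_lt_pi hθ.1 hθ.2
  have hstrip := integral_shearedStrip (integrable_exp_neg_mul_pi_mul_sq_div_sq hlam hs)
    (a := fun y => y * cos θ / sin θ) (by fun_prop) hℓ
  rw [hstrip, integral_exp_neg_mul_pi_mul_sq_div_sq hlam hs, smul_eq_mul]
  have hsqrt : √lam ^ 2 = lam := sq_sqrt hlam.le
  field_simp
  rw [hsqrt, mul_comm]

lemma setIntegral_Ioo_zero_pi_sin : ∫ θ in Set.Ioo 0 π, sin θ = 2 := by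
  rw [← integral_Ioc_eq_integral_Ioo, ← intervalIntegral.integral_of_le pi_pos.le, integral_sin]
  norm_num

/-- Intensity of beam reselection: with `2^n` beams (hence `2^(n-1)` beam boundaries,
each making a uniformly distributed angle `θ ∈ [0, π]` with the direction of motion),
the expected number of beam reselections over a path of length `ℓ` is
`2^(n-1) · (1/π) · ∫₀^π (λ ∫∫_{S_θ} exp(-λπy²/sin²θ) dx dy) dθ = (2^n √λ / π) ℓ`. -/
theorem beam_reselection_intensity (lam ℓ : ℝ) (n : ℕ) (hlam : 0 < lam)
    (hℓ : 0 ≤ ℓ) (hn : 0 < n) :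
    (2 : ℝ) ^ (n - 1) * (1 / Real.pi) *
        ∫ θ in Set.Ioo (0 : ℝ) Real.pi,
          (lam * ∫ p in {p : ℝ × ℝ |
              p.2 * Real.cos θ / Real.sin θ ≤ p.1 ∧
              p.1 ≤ ℓ + p.2 * Real.cos θ / Real.sin θ},
              Real.exp (-(lam * Real.pi * p.2 ^ 2 / Real.sin θ ^ 2)))
      = (2 : ℝ) ^ n * Real.sqrt lam / Real.pi * ℓ := by
  rw [setIntegral_congr_fun measurableSet_Ioo fun θ hθ => expected_boundary_crossings_eq hlam hℓ hθ,
    integral_const_mul, setIntegral_Ioo_zero_pi_sin]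
  obtain ⟨m, rfl⟩ := Nat.exists_eq_succ_of_ne_zero hn.ne'
  rw [Nat.succ_sub_one, pow_succ]
  ring
end
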